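/- arXiv:1705.07145 — 2 statements merged into one kernel-verified Lean document; each statement's English description precedes it below -/
import Mathlib

section
/- For every natural number n, ∑_{a=0}^{n} [C(a+5,5)·C(n-a+5,5) - C(a+3,5)·C(n-a+3,5)] = C(n+11,11) - C(n+7,11), where C(m,k)=0 if m<k. -/
open Finset

/-- Convolution identity: ∑_{a=0}^n C(a+k,k) C(n-a+l,l) = C(n+k+l+1, k+l+1). -/
lemma conv_choose (k : ℕ) : ∀ l n : ℕ,
    ∑ a ∈ range (n + 1), (a + k).choose k * (n - a + l).choose l
      = (n + k + l + 1).choose (k + l + 1) := by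
  intro l
  induction l with
  | zero =>
    intro n
    simpa using Nat.sum_range_add_choose n k
  | succ l ihl =>
    intro n
    induction n with
    | zero => simp
    | succ n ihn =>
      have peel : ∀ m : ℕ, ∑ a ∈ range (n + 1 + 1), (a + k).choose k * (n + 1 - a + m).choose m
          = (∑ a ∈ range (n + 1), (a + k).choose k * (n - a + (m + 1)).choose m)
            + (n + 1 + k).choose k := by
        intro m
        rw [Finset.sum_range_succ]
        congr 1
        · apply Finset.sum_congr rfl
          intro a ha
          have : a ≤ n := by simpa [Nat.lt_succ_iff] using ha
          congr 2
          omega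
        · simp
      have h1 := peel (l + 1)
      have h2 := (peel l).symm.trans (ihl (n + 1))
      -- Pascal inside the sum
      have hp : ∑ a ∈ range (n + 1), (a + k).choose k * (n - a + (l + 1 + 1)).choose (l + 1)
          = (∑ a ∈ range (n + 1), (a + k).choose k * (n - a + (l + 1)).choose l)
            + ∑ a ∈ range (n + 1), (a + k).choose k * (n - a + (l + 1)).choose (l + 1) := by
        rw [← Finset.sum_add_distrib]
        apply Finset.sum_congr rfl
        intro a _
        have e : n - a + (l + 1 + 1) = (n - a + (l + 1)) + 1 := by omega
        rw [e, Nat.choose_succ_succ, Nat.mul_add]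
      have pascal : (n + 1 + k + (l + 1) + 1).choose (k + (l + 1) + 1)
          = (n + 1 + k + l + 1).choose (k + l + 1)
            + (n + k + (l + 1) + 1).choose (k + (l + 1) + 1) := by
        have h := Nat.choose_succ_succ (n + k + l + 2) (k + l + 1)
        have e1 : n + 1 + k + (l + 1) + 1 = n + k + l + 2 + 1 := by omega
        have e2 : k + (l + 1) + 1 = k + l + 1 + 1 := by omega
        have e3 : n + 1 + k + l + 1 = n + k + l + 2 := by omega
        have e4 : n + k + (l + 1) + 1 = n + k + l + 2 := by omega
        rw [e1, e2, e3, e4, h]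
      omega

lemma shifted_sum (m : ℕ) :
    ∑ a ∈ Finset.range (m + 4 + 1), (a + 3).choose 5 * (m + 4 - a + 3).choose 5
      = (m + 7 + 4).choose 11 := by
  have e : m + 4 + 1 = m + 1 + 1 + 1 + 1 + 1 := by omega
  rw [e, Finset.sum_range_succ', Finset.sum_range_succ', Finset.sum_range_succ,
    Finset.sum_range_succ]
  have z1 : (0 + 3).choose 5 = 0 := by decide
  have z2 : (0 + 1 + 3).choose 5 = 0 := by decide
  have z3 : (m + 4 - (m + 1 + 1 + 1 + 1) + 3).choose 5 = 0 := by
    have : m + 4 - (m + 1 + 1 + 1 + 1) + 3 = 3 := by omega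
    rw [this]; decide
  have z4 : (m + 4 - (m + 1 + 1 + 1) + 3).choose 5 = 0 := by
    have : m + 4 - (m + 1 + 1 + 1) + 3 = 4 := by omega
    rw [this]; decide
  rw [z1, z2, z3, z4]
  simp only [Nat.mul_zero, Nat.zero_mul, Nat.add_zero]
  have hc : ∑ a ∈ Finset.range (m + 1), (a + 1 + 1 + 3).choose 5 * (m + 4 - (a + 1 + 1) + 3).choose 5
      = ∑ a ∈ Finset.range (m + 1), (a + 5).choose 5 * (m - a + 5).choose 5 := by
    apply Finset.sum_congr rfl
    intro a ha
    have : a ≤ m := by simpa [Nat.lt_succ_iff] using ha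
    congr 2 <;> omega
  rw [hc, conv_choose 5 5 m]

theorem stmt_3 (n : ℕ) :
    ∑ a ∈ Finset.range (n + 1),
        (((a + 5).choose 5 * (n - a + 5).choose 5 : ℤ)
          - ((a + 3).choose 5 * (n - a + 3).choose 5 : ℤ))
      = ((n + 11).choose 11 : ℤ) - ((n + 7).choose 11 : ℤ) := by
  rw [Finset.sum_sub_distrib]
  have h1 : ∑ a ∈ Finset.range (n + 1), ((a + 5).choose 5 * (n - a + 5).choose 5 : ℤ)
      = ((n + 11).choose 11 : ℤ) := by
    have := conv_choose 5 5 n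
    push_cast [← this]
    norm_num
  have h2 : ∑ a ∈ Finset.range (n + 1), ((a + 3).choose 5 * (n - a + 3).choose 5 : ℤ)
      = ((n + 7).choose 11 : ℤ) := by
    have key : ∑ a ∈ Finset.range (n + 1), (a + 3).choose 5 * (n - a + 3).choose 5
        = (n + 7).choose 11 := by
      rcases Nat.lt_or_ge n 4 with h | h
      · interval_cases n <;> decide
      · obtain ⟨m, rfl⟩ : ∃ m, n = m + 4 := ⟨n - 4, by omega⟩
        have := shifted_sum m
        have e : m + 7 + 4 = m + 4 + 7 := by omega
        rw [e] at this
        exact this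
    push_cast [← key]
    norm_num
  rw [h1, h2]
end

section
/- For every natural number n ≥ 4, C(n+11,11) - C(n+7,11) = C(n+11,11) - C((n-4)+11, 11); equivalently, writing d(k) = C(k+11,11) for the dimension of degree-k homogeneous polynomials in 12 variables (with d(k)=0 for k<0), one has ∑_{a=0}^{n}[C(a+5,5)C(n-a+5,5) - C(a+3,5)C(n-a+3,5)] = d(n) - d(n-4) for all natural numbers n. -/
open Finset

private lemma hs (p : ℕ) : ∀ n, ∑ a ∈ range (n+1), (a+p).choose p = (n+p+1).choose (p+1) := by
  intro n
  induction n with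
  | zero => simp
  | succ n ih =>
    rw [Finset.sum_range_succ, ih, show n+1+p+1 = (n+p+1)+1 from by ring,
      Nat.choose_succ_succ (n+p+1) p, show n+1+p = n+p+1 from by ring]
    simp only [Nat.succ_eq_add_one]
    omega

private lemma V (p : ℕ) : ∀ n q, ∑ a ∈ range (n+1), (a+p).choose p * ((n-a)+q).choose q
    = (n+(p+q)+1).choose ((p+q)+1) := by
  intro n
  induction n with
  | zero => simp
  | succ n ihn =>
    intro q
    induction q with
    | zero =>
      simp only [Nat.add_zero, Nat.choose_zero_right, mul_one]
      simpa using hs p (n+1)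
    | succ q ihq =>
      rw [Finset.sum_range_succ] at ihq ⊢
      have key := ihn (q+1)
      have h1 : ∀ a ∈ range (n+1),
          (a+p).choose p * ((n+1-a)+(q+1)).choose (q+1)
          = (a+p).choose p * ((n+1-a)+q).choose q
            + (a+p).choose p * ((n-a)+(q+1)).choose (q+1) := by
        intro a ha
        simp only [Finset.mem_range] at ha
        rw [show (n+1-a)+(q+1) = ((n-a)+(q+1))+1 from by omega,
          Nat.choose_succ_succ ((n-a)+(q+1)) q, Nat.mul_add,
          show (n-a)+(q+1) = (n+1-a)+q from by omega]
      rw [Finset.sum_congr rfl h1, Finset.sum_add_distrib, key]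
      simp only [Nat.sub_self, Nat.zero_add, Nat.choose_self, mul_one] at ihq ⊢
      have pascal : (n+(p+(q+1))+1+1).choose (p+(q+1)+1)
          = (n+1+(p+q)+1).choose (p+q+1) + (n+(p+(q+1))+1).choose (p+(q+1)+1) := by
        rw [show p+(q+1)+1 = (p+q+1)+1 from by ring,
          Nat.choose_succ_succ (n+(p+(q+1))+1) (p+q+1)]
        congr 2 <;> ring
      rw [show n+1+(p+(q+1))+1 = n+(p+(q+1))+1+1 from by ring, pascal, ← ihq]
      ring

private lemma L2 (m : ℕ) : ∑ a ∈ range (m+5), (a+3).choose 5 * ((m+4-a)+3).choose 5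
    = (m+11).choose 11 := by
  have e1 : m + 5 = (m+4)+1 := rfl
  rw [e1, Finset.sum_range_succ]
  rw [show m+4 = (m+3)+1 from rfl, Finset.sum_range_succ]
  rw [Finset.sum_range_succ', Finset.sum_range_succ']
  have f0 : (0+3).choose 5 = 0 := by decide
  have f1 : (0+1+3).choose 5 = 0 := by decide
  have g0 : (m+4-(m+4)+3).choose 5 = 0 := by
    rw [show m+4-(m+4)+3 = 3 from by omega]; decide
  have g1 : (m+4-(m+3)+3).choose 5 = 0 := by
    rw [show m+4-(m+3)+3 = 4 from by omega]; decide
  rw [f0, f1, g0, g1]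
  simp only [Nat.zero_mul, Nat.mul_zero, Nat.add_zero]
  have hcg : ∀ a ∈ range (m+1),
      (a+1+1+3).choose 5 * ((m+4-(a+1+1))+3).choose 5
      = (a+5).choose 5 * ((m-a)+5).choose 5 := by
    intro a ha
    simp only [Finset.mem_range] at ha
    rw [show a+1+1+3 = a+5 from by ring, show m+4-(a+1+1)+3 = (m-a)+5 from by omega]
  rw [Finset.sum_congr rfl hcg]
  have := V 5 m 5
  norm_num at this
  exact this

theorem stmt_11 (d : ℤ → ℤ)
    (hd : ∀ k : ℤ, d k = if k < 0 then 0 else ((k.toNat + 11).choose 11 : ℤ)) :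
    (∀ n : ℕ, 4 ≤ n →
      ((n + 11).choose 11 : ℤ) - ((n + 7).choose 11 : ℤ)
        = ((n + 11).choose 11 : ℤ) - (((n - 4) + 11).choose 11 : ℤ)) ∧
    (∀ n : ℕ,
      ∑ a ∈ Finset.range (n + 1),
          (((a + 5).choose 5 * (n - a + 5).choose 5 : ℤ)
            - ((a + 3).choose 5 * (n - a + 3).choose 5 : ℤ))
        = d n - d ((n : ℤ) - 4)) := by
  constructor
  · intro n hn
    rw [show n - 4 + 11 = n + 7 from by omega]
  · intro n
    have hdn : d n = ((n+11).choose 11 : ℤ) := by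
      rw [hd]
      simp
    have hV1 : (∑ a ∈ range (n+1), ((a+5).choose 5 * ((n-a)+5).choose 5 : ℤ))
        = ((n+11).choose 11 : ℤ) := by
      have h := V 5 n 5
      norm_num at h
      exact_mod_cast congrArg (fun x : ℕ => (x : ℤ)) h
    rw [Finset.sum_sub_distrib, hV1, hdn]
    by_cases hn : 4 ≤ n
    · obtain ⟨m, rfl⟩ : ∃ m, n = m + 4 := ⟨n - 4, by omega⟩
      have hd2 : d ((↑(m+4) : ℤ) - 4) = ((m+11).choose 11 : ℤ) := by
        rw [hd]
        rw [if_neg (by push_cast; omega)]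
        norm_num
      rw [hd2]
      have hL := L2 m
      have : (∑ a ∈ range (m+4+1), ((a+3).choose 5 * ((m+4-a)+3).choose 5 : ℤ))
          = ((m+11).choose 11 : ℤ) := by
        exact_mod_cast congrArg (fun x : ℕ => (x : ℤ)) hL
      rw [this]
    · have hzero : ∀ a ∈ range (n+1), ((a+3).choose 5 * ((n-a)+3).choose 5 : ℤ) = 0 := by
        intro a ha
        simp only [Finset.mem_range] at ha
        rcases le_or_gt 2 a with h2 | h2
        · have : ((n-a)+3).choose 5 = 0 := Nat.choose_eq_zero_of_lt (by omega)
          rw [this]; simp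
        · have : (a+3).choose 5 = 0 := Nat.choose_eq_zero_of_lt (by omega)
          rw [this]; simp
      rw [Finset.sum_eq_zero hzero, hd]
      rw [if_pos (by push_cast; omega)]
end
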